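/- arXiv:2104.08770 — 5 statements merged into one kernel-verified Lean document; each statement's English description precedes it below -/
import Mathlib

section
/- Consider a system of linear inequalities in variables x_1,…,x_N over ℝ consisting of inequalities of the form a_m · x_{i_m} ≤ x_{j_m} + x_{k_m} for m = 1,…,M with each a_m ≥ 2, together with x_i > 0 for all i. Define a digraph D on vertex set {1,…,N} where each inequality a·x_α ≤ x_β + x_γ contributes edges (α,β) and (α,γ). If D is strongly connected, then the system is feasible if and only if a_1 = a_2 = ⋯ = a_M = 2, and in that case every feasible solution satisfies x_1 = x_2 = ⋯ = x_N. -/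
/-!
Take a vertex `α` where a feasible `x` is maximal. An inequality `a · x α ≤ x β + x γ` with
`a ≥ 2` and `x β, x γ ≤ x α` forces `x β = x γ = x α` (and `a = 2`, as `x α > 0`), so the maximum
propagates along the edges of the digraph; strong connectivity spreads it to every vertex. Then
every inequality reads `a · c ≤ 2 c`, i.e. `a = 2`; conversely the constant vector is feasible.
-/

theorem eq_and_eq_and_eq_two_of_mul_le_add {a c y z : ℝ} (ha : 2 ≤ a) (hc : 0 < c)
    (hy : y ≤ c) (hz : z ≤ c) (h : a * c ≤ y + z) : y = c ∧ z = c ∧ a = 2 := by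
  have h2c : 2 * c ≤ a * c := mul_le_mul_of_nonneg_right ha hc.le
  refine ⟨by linarith, by linarith, ?_⟩
  nlinarith

section

variable {V ι : Type*} {a : ι → ℝ} {i j k : ι → V} {x : V → ℝ}

def constraintEdge (i j k : ι → V) (α β : V) : Prop :=
  ∃ m, i m = α ∧ (j m = β ∨ k m = β)

theorem eq_of_reflTransGen_constraintEdge_of_isMax (ha : ∀ m, 2 ≤ a m) (hpos : ∀ v, 0 < x v)
    (hx : ∀ m, a m * x (i m) ≤ x (j m) + x (k m)) {α β : V} (hmax : ∀ v, x v ≤ x α)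
    (hαβ : Relation.ReflTransGen (constraintEdge i j k) α β) : x β = x α := by
  induction hαβ with
  | refl => rfl
  | tail _ hedge ih =>
    obtain ⟨m, rfl, hβ⟩ := hedge
    obtain ⟨hj, hk, -⟩ := eq_and_eq_and_eq_two_of_mul_le_add (ha m) (hpos α) (hmax (j m))
      (hmax (k m)) (ih ▸ hx m)
    rcases hβ with rfl | rfl
    exacts [hj, hk]

variable [Finite V] (hconn : ∀ α β, Relation.ReflTransGen (constraintEdge i j k) α β)
include hconn

theorem exists_eq_of_strongly_connected (ha : ∀ m, 2 ≤ a m) (hpos : ∀ v, 0 < x v)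
    (hx : ∀ m, a m * x (i m) ≤ x (j m) + x (k m)) [Nonempty V] : ∃ c, ∀ v, x v = c := by
  obtain ⟨α, hmax⟩ := Finite.exists_max x
  exact ⟨x α, fun β ↦ eq_of_reflTransGen_constraintEdge_of_isMax ha hpos hx hmax (hconn α β)⟩

theorem eq_of_strongly_connected (ha : ∀ m, 2 ≤ a m) (hpos : ∀ v, 0 < x v)
    (hx : ∀ m, a m * x (i m) ≤ x (j m) + x (k m)) (v w : V) : x v = x w := by
  have : Nonempty V := ⟨v⟩
  obtain ⟨c, hc⟩ := exists_eq_of_strongly_connected hconn ha hpos hx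
  rw [hc v, hc w]

theorem eq_two_of_strongly_connected (ha : ∀ m, 2 ≤ a m) (hpos : ∀ v, 0 < x v)
    (hx : ∀ m, a m * x (i m) ≤ x (j m) + x (k m)) (m : ι) : a m = 2 := by
  have : Nonempty V := ⟨i m⟩
  obtain ⟨c, hc⟩ := exists_eq_of_strongly_connected hconn ha hpos hx
  have hxm := hx m
  rw [hc, hc, hc] at hxm
  exact (eq_and_eq_and_eq_two_of_mul_le_add (ha m) (hc (i m) ▸ hpos (i m)) le_rfl le_rfl hxm).2.2

end

theorem stmt_3_general (N M : ℕ)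
    (a : Fin M → ℝ) (ha : ∀ m, 2 ≤ a m) (i j k : Fin M → Fin N)
    (hconn : ∀ α β : Fin N,
      Relation.ReflTransGen (fun α β => ∃ m, i m = α ∧ (j m = β ∨ k m = β)) α β) :
    ((∃ x : Fin N → ℝ, (∀ n, 0 < x n) ∧ ∀ m, a m * x (i m) ≤ x (j m) + x (k m)) ↔
      ∀ m, a m = 2) ∧
    (∀ x : Fin N → ℝ,
      ((∀ n, 0 < x n) ∧ ∀ m, a m * x (i m) ≤ x (j m) + x (k m)) →
      ∀ n n', x n = x n') := by
  refine ⟨⟨fun ⟨x, hpos, hx⟩ ↦ eq_two_of_strongly_connected hconn ha hpos hx, fun h2 ↦ ?_⟩,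
    fun x ⟨hpos, hx⟩ ↦ eq_of_strongly_connected hconn ha hpos hx⟩
  exact ⟨fun _ ↦ 1, fun _ ↦ one_pos, fun m ↦ by rw [h2 m]; norm_num⟩

theorem stmt_3 (N M : ℕ) (hN : 0 < N) (hM : 0 < M)
    (a : Fin M → ℝ) (ha : ∀ m, 2 ≤ a m) (i j k : Fin M → Fin N)
    (hconn : ∀ α β : Fin N,
      Relation.ReflTransGen (fun α β => ∃ m, i m = α ∧ (j m = β ∨ k m = β)) α β) :
    ((∃ x : Fin N → ℝ, (∀ n, 0 < x n) ∧ ∀ m, a m * x (i m) ≤ x (j m) + x (k m)) ↔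
      ∀ m, a m = 2) ∧
    (∀ x : Fin N → ℝ,
      ((∀ n, 0 < x n) ∧ ∀ m, a m * x (i m) ≤ x (j m) + x (k m)) →
      ∀ n n', x n = x n') :=
  stmt_3_general N M a ha i j k hconn
end

section
/- If a system of inequalities of the form a_m·x_{i_m} ≤ x_{j_m} + x_{k_m} (a_m ≥ 2) together with x_i > 0 has a strongly connected associated digraph, and at least one coefficient a_m satisfies a_m > 2, then the system is infeasible. -/
/-! Take a node α₀ where x is maximal, with value c > 0. If x (i m) = c then
`2 c ≤ a m c ≤ x (j m) + x (k m) ≤ 2 c`, so both successors of i m are maximal too. By strong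
connectivity every node is then maximal, and any inequality with `a m > 2` reads `a m c ≤ 2 c`,
which is impossible. -/

theorem eq_of_two_mul_le_add {x y c : ℝ} (hx : x ≤ c) (hy : y ≤ c) (h : 2 * c ≤ x + y) :
    x = c ∧ y = c :=
  ⟨by linarith, by linarith⟩

section InequalitySystem

variable {ι μ : Type*} {a : μ → ℝ} {i j k : μ → ι} {x : ι → ℝ} {c : ℝ}

theorem successors_eq_max (ha : ∀ m, 2 ≤ a m)
    (hineq : ∀ m, a m * x (i m) ≤ x (j m) + x (k m)) (hle : ∀ n, x n ≤ c) (hc : 0 ≤ c)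
    {m : μ} (him : x (i m) = c) : x (j m) = c ∧ x (k m) = c := by
  refine eq_of_two_mul_le_add (hle _) (hle _) ?_
  calc 2 * c ≤ a m * c := mul_le_mul_of_nonneg_right (ha m) hc
    _ = a m * x (i m) := by rw [him]
    _ ≤ x (j m) + x (k m) := hineq m

theorem eq_max_of_reflTransGen (ha : ∀ m, 2 ≤ a m)
    (hineq : ∀ m, a m * x (i m) ≤ x (j m) + x (k m)) (hle : ∀ n, x n ≤ c) (hc : 0 ≤ c)
    {α β : ι} (hα : x α = c)
    (hαβ : Relation.ReflTransGen (fun α β => ∃ m, i m = α ∧ (j m = β ∨ k m = β)) α β) :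
    x β = c := by
  induction hαβ with
  | refl => exact hα
  | tail _ hedge ih =>
    obtain ⟨m, rfl, rfl | rfl⟩ := hedge
    · exact (successors_eq_max ha hineq hle hc ih).1
    · exact (successors_eq_max ha hineq hle hc ih).2

end InequalitySystem

theorem stmt_4_general (N M : ℕ)
    (a : Fin M → ℝ) (ha : ∀ m, 2 ≤ a m) (i j k : Fin M → Fin N)
    (hconn : ∀ α β : Fin N,
      Relation.ReflTransGen (fun α β => ∃ m, i m = α ∧ (j m = β ∨ k m = β)) α β)
    (hbig : ∃ m, 2 < a m) :
    ¬ ∃ x : Fin N → ℝ, (∀ n, 0 < x n) ∧ ∀ m, a m * x (i m) ≤ x (j m) + x (k m) := by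
  rintro ⟨x, hpos, hineq⟩
  obtain ⟨m, hm⟩ := hbig
  obtain ⟨α₀, -, hmax⟩ := Finset.exists_max_image Finset.univ x ⟨i m, Finset.mem_univ _⟩
  have hle : ∀ n, x n ≤ x α₀ := fun n => hmax n (Finset.mem_univ n)
  have hconst : ∀ β, x β = x α₀ := fun β =>
    eq_max_of_reflTransGen ha hineq hle (hpos α₀).le rfl (hconn α₀ β)
  have h := hineq m
  rw [hconst (i m), hconst (j m), hconst (k m)] at h
  nlinarith [hpos α₀]

theorem stmt_4 (N M : ℕ) (hN : 0 < N) (hM : 0 < M)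
    (a : Fin M → ℝ) (ha : ∀ m, 2 ≤ a m) (i j k : Fin M → Fin N)
    (hconn : ∀ α β : Fin N,
      Relation.ReflTransGen (fun α β => ∃ m, i m = α ∧ (j m = β ∨ k m = β)) α β)
    (hbig : ∃ m, 2 < a m) :
    ¬ ∃ x : Fin N → ℝ, (∀ n, 0 < x n) ∧ ∀ m, a m * x (i m) ≤ x (j m) + x (k m) :=
  stmt_4_general N M a ha i j k hconn hbig
end

section
/- Let p ≡ 1 (mod 4) be prime, G_p the Paley graph, and x, y, z ∈ 𝔽_p distinct. Then |(Γ(x) ∩ Γ(y)) \ Γ(z)| ≥ p/8 − 5√p − 1; in particular this set is nonempty whenever p ≥ 1711. -/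
open scoped Classical

/-- `a` is a (nonzero) quadratic residue in `ZMod p`. -/
def IsQR (p : ℕ) (a : ZMod p) : Prop := a ≠ 0 ∧ IsSquare a

/-- The Paley graph on `𝔽_p`: `a ~ b` iff `a - b` is a nonzero quadratic residue.
(The adjacency is stated symmetrically; when `-1` is a residue this agrees with
the usual definition.) -/
def paley (p : ℕ) : SimpleGraph (ZMod p) where
  Adj a b := a ≠ b ∧ IsSquare (a - b) ∧ IsSquare (b - a)
  symm := by constructor; intro a b h; exact ⟨h.1.symm, h.2.2, h.2.1⟩
  loopless := by constructor; intro a h; exact h.1 rfl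

/-!
Write `χ` for the quadratic character of `ZMod p`. As `-1` is a square, `v` lies in the set
exactly when `χ (v - x) = χ (v - y) = 1 ≠ χ (v - z)`, so up to the points `x, y, z` its size is
`1 / 8` of `∑ v, (1 + χ (v - x)) (1 + χ (v - y)) (1 - χ (v - z))`. Expanding, the linear sums
vanish and what is left are four sums `∑ v, χ (f v)`, with `f` a product of two or three of
`X - x, X - y, X - z`; each is at most `9 √p` in absolute value.

That bound is Stepanov's method. Let `f` have degree at most `3` and a simple root, `e = p / 2`,
and `Φ = ∑ j, X ^ (p j) (f ^ m a j + f ^ (m + e) b j)` with `deg a j, deg b j ≤ g`. Since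
`(X ^ (p j))' = 0` and `v ^ p = v`, at every `v` with `f v ^ e = 1` the `k`-th derivative of `Φ`
is `f v ^ (m - k) Ψ_k v`, where `Ψ_k` has low degree and depends linearly on `(a, b)`; counting
dimensions, some `(a, b) ≠ 0` makes `Ψ_k = 0` for all `k < m`, so `Φ` vanishes to order `m` at
all these `v`. And `Φ ≠ 0`: otherwise `f A (X ^ p) ^ 2 = f ^ p B (X ^ p) ^ 2` for
`A = ∑ j, a j Y ^ j` and `B = ∑ j, b j Y ^ j`; as `f ^ p = f (X ^ p)` and all `X`-degrees stay
below `p`, this lifts to `f A ^ 2 = f (Y) B ^ 2`, and comparing leading coefficients in `Y` would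
make `f` a constant times a square. Hence `m #{v | f v ^ e = 1} ≤ deg Φ`, and `m ≈ 2 √p / 3`
gives `p / 2 + 4 √p`.
-/

open Polynomial Finset

namespace Paley

theorem card_mul_le_natDegree_of_le_rootMultiplicity {R : Type*} [CommRing R] [IsDomain R]
    [DecidableEq R] {Φ : R[X]} (S : Finset R) {m : ℕ}
    (hS : ∀ v ∈ S, m ≤ Φ.rootMultiplicity v) : S.card * m ≤ Φ.natDegree := by
  have hle : m • S.val ≤ Φ.roots := Multiset.le_iff_count.mpr fun v => by
    rw [Multiset.count_nsmul, count_roots, Multiset.count_eq_of_nodup S.nodup]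
    split_ifs with hv
    · simpa using hS v hv
    · simp
  calc S.card * m = Multiset.card (m • S.val) := by simp [mul_comm]
    _ ≤ Multiset.card Φ.roots := Multiset.card_le_card hle
    _ ≤ Φ.natDegree := card_roots' Φ

theorem eq_zero_of_mul_sq_eq_C_mul_sq {R : Type*} [CommRing R] [IsDomain R] {f A B : R[X]} {r u : R}
    (hr : f.rootMultiplicity r = 1) (hu : u ≠ 0) (h : f * A ^ 2 = C u * B ^ 2) :
    A = 0 ∧ B = 0 := by
  have hf : f ≠ 0 := by rintro rfl; simp at hr
  have hCu : C u ≠ 0 := C_ne_zero.mpr hu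
  by_cases hA : A = 0
  · subst hA
    simpa [hCu] using h.symm
  have hB : B ≠ 0 := by rintro rfl; simp [hf, hA] at h
  have := congrArg (rootMultiplicity r) h
  rw [rootMultiplicity_mul (mul_ne_zero hf (pow_ne_zero 2 hA)),
    rootMultiplicity_mul (mul_ne_zero hCu (pow_ne_zero 2 hB)), rootMultiplicity_C, hr, sq, sq,
    rootMultiplicity_mul (mul_ne_zero hA hA), rootMultiplicity_mul (mul_ne_zero hB hB)] at this
  omega

theorem natDegree_coeff_mul_le {R : Type*} [Semiring R] {P Q : R[X][X]} {g h : ℕ}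
    (hP : ∀ i, (P.coeff i).natDegree ≤ g) (hQ : ∀ i, (Q.coeff i).natDegree ≤ h) (i : ℕ) :
    ((P * Q).coeff i).natDegree ≤ g + h := by
  rw [coeff_mul]
  exact natDegree_sum_le_of_forall_le _ _ fun x _ =>
    natDegree_mul_le.trans (add_le_add (hP _) (hQ _))

theorem natDegree_coeff_ofFn_le {R : Type*} [Semiring R] [DecidableEq R[X]] {J g : ℕ}
    {c : Fin J → R[X]} (hc : ∀ j, (c j).natDegree ≤ g) (i : ℕ) :
    ((ofFn J c).coeff i).natDegree ≤ g := by
  rcases lt_or_ge i J with hi | hi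
  · rw [ofFn_coeff_eq_val_of_lt c hi]
    exact hc _
  · simp [ofFn_coeff_eq_zero_of_ge c hi]

theorem eval_X_pow_ne_zero {R : Type*} [Semiring R] {P : R[X][X]} {q : ℕ}
    (hP : ∀ i, (P.coeff i).natDegree < q) (h0 : P ≠ 0) : P.eval (X ^ q) ≠ 0 := by
  set n := P.natDegree
  set d := (P.coeff n).natDegree
  have hlead : (P.coeff n).coeff d ≠ 0 := leadingCoeff_ne_zero.mpr (leadingCoeff_ne_zero.mpr h0)
  refine fun h => hlead ?_
  rw [← coeff_zero (R := R) (q * n + d), ← h, eval_eq_sum_range, finsetSum_coeff,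
    Finset.sum_eq_single n]
  · rw [← pow_mul, coeff_mul_X_pow', if_pos (Nat.le_add_right _ _), mul_comm,
      Nat.add_sub_cancel_left]
  · intro i hi hin
    have hlt : i < n := lt_of_le_of_ne (Finset.mem_range_succ_iff.mp hi) hin
    have : q * i + q ≤ q * n := by nlinarith
    rw [← pow_mul, coeff_mul_X_pow', if_pos (by omega)]
    exact coeff_eq_zero_of_natDegree_lt (by have := hP i; omega)
  · exact fun h => absurd (Finset.self_mem_range_succ n) h

theorem exists_ne_zero_forall_eq_zero_of_sum_lt_finrank {K V ι : Type*} [Field K]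
    [AddCommGroup V] [Module K V] [FiniteDimensional K V] [Fintype ι] (T : ι → V →ₗ[K] K[X])
    (N : ι → ℕ) (hT : ∀ i v, (T i v).natDegree < N i) (hN : ∑ i, N i < Module.finrank K V) :
    ∃ v ≠ 0, ∀ i, T i v = 0 := by
  let Φ : V →ₗ[K] ((i : ι) → Fin (N i) → K) := LinearMap.pi fun i => toFn (N i) ∘ₗ T i
  have hrank : Module.finrank K ((i : ι) → Fin (N i) → K) = ∑ i, N i := by
    simp [Module.finrank_pi_fintype]
  obtain ⟨v, hv, hv0⟩ := (Submodule.ne_bot_iff _).mp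
    (LinearMap.ker_ne_bot_of_finrank_lt (f := Φ) (by rwa [hrank]))
  refine ⟨v, hv0, fun i => ?_⟩
  have hi : toFn (N i) (T i v) = 0 := congrFun (LinearMap.mem_ker.mp hv) i
  rw [← ofFn_comp_toFn_eq_id_of_natDegree_lt (hT i v), hi, map_zero]

theorem quadraticChar_eq_zero_or_one_or_neg_one {F : Type*} [Field F] [Fintype F] [DecidableEq F]
    (w : F) : quadraticChar F w = 0 ∨ quadraticChar F w = 1 ∨ quadraticChar F w = -1 := by
  rcases eq_or_ne w 0 with rfl | hw
  · exact Or.inl quadraticChar_zero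
  · exact Or.inr (quadraticChar_dichotomy hw)

theorem sum_quadraticChar_eq {F ι : Type*} [Field F] [Fintype F] [DecidableEq F] [Fintype ι]
    (φ : ι → F) : ∑ i, quadraticChar F (φ i) =
      2 * #{i | quadraticChar F (φ i) = 1} - Fintype.card ι + #{i | φ i = 0} := by
  have hpt : ∀ w : F, quadraticChar F w =
      2 * (if quadraticChar F w = 1 then 1 else 0) - 1 + (if w = 0 then 1 else 0) := by
    intro w
    rcases eq_or_ne w 0 with rfl | hw
    · simp
    · rcases quadraticChar_dichotomy hw with h | h <;> simp [h, hw]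
  simp only [Finset.natCast_card_filter, Fintype.card_eq_sum_ones, Nat.cast_sum, Nat.cast_one,
    Finset.mul_sum, ← Finset.sum_sub_distrib, ← Finset.sum_add_distrib]
  exact Finset.sum_congr rfl fun i _ => hpt (φ i)

theorem one_add_mul_one_add_mul_one_sub_le {a b c : ℤ} (ha : a = 0 ∨ a = 1 ∨ a = -1)
    (hb : b = 0 ∨ b = 1 ∨ b = -1) (hc : c = 0 ∨ c = 1 ∨ c = -1) :
    (1 + a) * (1 + b) * (1 - c) ≤ 8 * (if a = 1 ∧ b = 1 ∧ c ≠ 1 then 1 else 0) +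
      4 * ((if a = 0 then 1 else 0) + (if b = 0 then 1 else 0) + (if c = 0 then 1 else 0)) := by
  rcases ha with rfl | rfl | rfl <;> rcases hb with rfl | rfl | rfl <;>
    rcases hc with rfl | rfl | rfl <;> norm_num

section DerivQuot

variable {K : Type*} [Field K]

noncomputable def derivQuot (f : K[X]) (n k : ℕ) (c : K[X]) : K[X] :=
  derivative^[k] (f ^ n * c) / f ^ (n - k)

variable {f : K[X]} {n k : ℕ}

theorem pow_sub_mul_derivQuot (hf : f ≠ 0) (c : K[X]) :
    f ^ (n - k) * derivQuot f n k c = derivative^[k] (f ^ n * c) :=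
  EuclideanDomain.mul_div_cancel' (pow_ne_zero _ hf)
    (pow_sub_dvd_iterate_derivative_of_pow_dvd k (dvd_mul_right _ _))

theorem derivQuot_add (hf : f ≠ 0) (c d : K[X]) :
    derivQuot f n k (c + d) = derivQuot f n k c + derivQuot f n k d := by
  refine mul_left_cancel₀ (pow_ne_zero (n - k) hf) ?_
  rw [mul_add, pow_sub_mul_derivQuot hf, pow_sub_mul_derivQuot hf, pow_sub_mul_derivQuot hf,
    mul_add, iterate_map_add]

theorem derivQuot_smul (hf : f ≠ 0) (a : K) (c : K[X]) :
    derivQuot f n k (a • c) = a • derivQuot f n k c := by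
  refine mul_left_cancel₀ (pow_ne_zero (n - k) hf) ?_
  rw [mul_smul_comm, pow_sub_mul_derivQuot hf, pow_sub_mul_derivQuot hf, mul_smul_comm,
    iterate_derivative_smul]

theorem natDegree_derivQuot_le (hf : f ≠ 0) (hk : k ≤ n) (c : K[X]) :
    (derivQuot f n k c).natDegree ≤ c.natDegree + k * (f.natDegree - 1) := by
  rcases eq_or_ne c 0 with rfl | hc
  · simp [derivQuot]
  have hmul := congrArg natDegree (pow_sub_mul_derivQuot (n := n) (k := k) hf c)
  rcases eq_or_ne (derivQuot f n k c) 0 with h0 | h0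
  · simp [h0]
  rw [natDegree_mul (pow_ne_zero _ hf) h0, natDegree_pow] at hmul
  have hle := natDegree_iterate_derivative (f ^ n * c) k
  rw [natDegree_mul (pow_ne_zero _ hf) hc, natDegree_pow] at hle
  have hsplit : n * f.natDegree = (n - k) * f.natDegree + k * f.natDegree := by
    rw [← add_mul, Nat.sub_add_cancel hk]
  have : k * (f.natDegree - 1) = k * f.natDegree - k := by rw [Nat.mul_sub_one]
  omega

end DerivQuot

theorem iterate_derivative_X_pow_mul_of_charP {R : Type*} [CommRing R] (p : ℕ) [CharP R p]
    (j k : ℕ) (g : R[X]) : derivative^[k] (X ^ (p * j) * g) = X ^ (p * j) * derivative^[k] g := by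
  induction k generalizing g with
  | zero => rfl
  | succ k ih =>
    rw [Function.iterate_succ_apply, Function.iterate_succ_apply, derivative_mul, derivative_X_pow,
      Nat.cast_mul, CharP.cast_eq_zero, zero_mul, map_zero, zero_mul, zero_mul, zero_add, ih]

variable {p : ℕ} [Fact p.Prime]

section StepanovPoly

variable {J : ℕ} (f : (ZMod p)[X]) (m e : ℕ) (a b : Fin J → (ZMod p)[X])

noncomputable def stepanovPoly : (ZMod p)[X] :=
  ∑ j : Fin J, X ^ (p * j) * (f ^ m * a j + f ^ (m + e) * b j)

noncomputable def stepanovDeriv (k : ℕ) : (ZMod p)[X] :=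
  ∑ j : Fin J, X ^ (j : ℕ) * (derivQuot f m k (a j) + derivQuot f (m + e) k (b j))

variable {f m e a b}

theorem stepanovDeriv_add (hf : f ≠ 0) (a' b' : Fin J → (ZMod p)[X]) (k : ℕ) :
    stepanovDeriv f m e (a + a') (b + b') k =
      stepanovDeriv f m e a b k + stepanovDeriv f m e a' b' k := by
  simp only [stepanovDeriv, Pi.add_apply, derivQuot_add hf, ← Finset.sum_add_distrib]
  exact Finset.sum_congr rfl fun j _ => by ring

theorem stepanovDeriv_smul (hf : f ≠ 0) (c : ZMod p) (k : ℕ) :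
    stepanovDeriv f m e (c • a) (c • b) k = c • stepanovDeriv f m e a b k := by
  simp only [stepanovDeriv, Pi.smul_apply, derivQuot_smul hf, Finset.smul_sum, ← smul_add,
    mul_smul_comm]

theorem natDegree_stepanovDeriv_le (hf : f ≠ 0) (hdeg : f.natDegree ≤ 3) {g : ℕ}
    (ha : ∀ j, (a j).natDegree ≤ g) (hb : ∀ j, (b j).natDegree ≤ g) {k : ℕ} (hk : k ≤ m) :
    (stepanovDeriv f m e a b k).natDegree ≤ J - 1 + (g + 2 * k) := by
  have hquot : ∀ n c, k ≤ n → c.natDegree ≤ g → (derivQuot f n k c).natDegree ≤ g + 2 * k :=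
    fun n c hkn hc => by
      have := natDegree_derivQuot_le hf hkn c
      have : k * (f.natDegree - 1) ≤ k * 2 := Nat.mul_le_mul_left k (by omega)
      omega
  refine natDegree_sum_le_of_forall_le _ _ fun j _ => natDegree_mul_le.trans ?_
  rw [natDegree_X_pow]
  exact add_le_add (by omega) ((natDegree_add_le _ _).trans
    (max_le (hquot m _ hk (ha j)) (hquot (m + e) _ (by omega) (hb j))))

theorem natDegree_stepanovPoly_le (hdeg : f.natDegree ≤ 3) {g : ℕ}
    (ha : ∀ j, (a j).natDegree ≤ g) (hb : ∀ j, (b j).natDegree ≤ g) :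
    (stepanovPoly f m e a b).natDegree ≤ p * (J - 1) + (3 * (m + e) + g) := by
  have hpow : ∀ n, (f ^ n).natDegree ≤ 3 * n := fun n =>
    natDegree_pow_le.trans ((Nat.mul_le_mul_left n hdeg).trans_eq (mul_comm n 3))
  refine natDegree_sum_le_of_forall_le _ _ fun j _ => natDegree_mul_le.trans ?_
  rw [natDegree_X_pow]
  refine add_le_add (Nat.mul_le_mul_left p (by omega)) ((natDegree_add_le _ _).trans (max_le ?_ ?_))
  · exact natDegree_mul_le.trans (add_le_add ((hpow m).trans (by omega)) (ha j))
  · exact natDegree_mul_le.trans (add_le_add (hpow _) (hb j))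

theorem eval_iterate_derivative_stepanovPoly (hf : f ≠ 0) {k : ℕ} (hk : k ≤ m) {v : ZMod p}
    (hv : f.eval v ^ e = 1) :
    (derivative^[k] (stepanovPoly f m e a b)).eval v =
      f.eval v ^ (m - k) * (stepanovDeriv f m e a b k).eval v := by
  simp only [stepanovPoly, stepanovDeriv, iterate_derivative_sum,
    iterate_derivative_X_pow_mul_of_charP, iterate_map_add, ← pow_sub_mul_derivQuot hf,
    eval_finsetSum, Finset.mul_sum]
  refine Finset.sum_congr rfl fun j _ => ?_
  have hme : m + e - k = (m - k) + e := by omega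
  simp only [eval_mul, eval_add, eval_pow, eval_X, pow_mul, ZMod.pow_card, hme, pow_add, hv]
  ring

theorem le_rootMultiplicity_stepanovPoly (hf : f ≠ 0) (hmp : m < p)
    (hΦ : stepanovPoly f m e a b ≠ 0) (hΨ : ∀ k < m, stepanovDeriv f m e a b k = 0)
    {v : ZMod p} (hv : f.eval v ^ e = 1) : m ≤ (stepanovPoly f m e a b).rootMultiplicity v := by
  obtain _ | m := m
  · exact Nat.zero_le _
  refine lt_rootMultiplicity_of_isRoot_iterate_derivative_of_mem_nonZeroDivisors' hΦ
    (fun k hk => ?_) (fun i hi hi0 => mem_nonZeroDivisors_of_ne_zero ?_)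
  · rw [IsRoot, eval_iterate_derivative_stepanovPoly hf (by omega) hv, hΨ k (by omega),
      eval_zero, mul_zero]
  · rw [Ne, ZMod.natCast_eq_zero_iff]
    exact fun h => absurd (Nat.le_of_dvd (Nat.pos_of_ne_zero hi0) h) (by omega)

theorem stepanovPoly_eq_mul_eval_ofFn [DecidableEq (ZMod p)[X]] :
    stepanovPoly f m e a b =
      f ^ m * ((ofFn J a).eval (X ^ p) + f ^ e * (ofFn J b).eval (X ^ p)) := by
  simp only [stepanovPoly, ofFn_eq_sum_monomial, eval_finsetSum, eval_monomial, Finset.mul_sum,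
    ← Finset.sum_add_distrib, ← pow_mul]
  refine Finset.sum_congr rfl fun j _ => ?_
  ring

theorem stepanovPoly_ne_zero {r : ZMod p} (hroot : f.rootMultiplicity r = 1) {g : ℕ}
    (hfg : f.natDegree + 2 * g < p) (hpe : p = 2 * e + 1) (ha : ∀ j, (a j).natDegree ≤ g)
    (hb : ∀ j, (b j).natDegree ≤ g) (hab : a ≠ 0 ∨ b ≠ 0) : stepanovPoly f m e a b ≠ 0 := by
  have hf : f ≠ 0 := by rintro rfl; simp at hroot
  set A := ofFn J a
  set B := ofFn J b
  set P : (ZMod p)[X][X] := C f * A ^ 2 - f.map C * B ^ 2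
  intro h0
  rw [stepanovPoly_eq_mul_eval_ofFn, mul_eq_zero, or_iff_right (pow_ne_zero m hf),
    add_eq_zero_iff_eq_neg] at h0
  have hP : P.eval (X ^ p) = 0 := by
    have hfp : f ^ p = f ^ (2 * e + 1) := by rw [← hpe]
    rw [eval_sub, eval_mul, eval_mul, eval_C, eval_map, ← coe_expand, ZMod.expand_card, eval_pow,
      eval_pow, h0, hfp]
    ring
  have hPcoeff : ∀ i, (P.coeff i).natDegree < p := by
    intro i
    have h1 : ((C f * A ^ 2).coeff i).natDegree ≤ f.natDegree + (g + g) := by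
      rw [coeff_C_mul, sq]
      exact natDegree_mul_le.trans (Nat.add_le_add_left (natDegree_coeff_mul_le
        (natDegree_coeff_ofFn_le ha) (natDegree_coeff_ofFn_le ha) i) _)
    have h2 : ((f.map C * B ^ 2).coeff i).natDegree ≤ 0 + (g + g) := by
      rw [sq, ← mul_assoc]
      refine natDegree_coeff_mul_le (natDegree_coeff_mul_le (g := 0) (fun i => ?_)
        (natDegree_coeff_ofFn_le hb)) (natDegree_coeff_ofFn_le hb) i |>.trans (by omega)
      simp [coeff_map]
    rw [coeff_sub]
    exact (natDegree_sub_le _ _).trans_lt (by omega)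
  have hP0 : P = 0 := by
    by_contra hne
    exact eval_X_pow_ne_zero hPcoeff hne hP
  have hlc := congrArg leadingCoeff (sub_eq_zero.mp hP0)
  rw [leadingCoeff_mul, leadingCoeff_mul, leadingCoeff_C, leadingCoeff_pow, leadingCoeff_pow,
    leadingCoeff_map_of_injective C_injective] at hlc
  obtain ⟨hA, hB⟩ := eq_zero_of_mul_sq_eq_C_mul_sq hroot (leadingCoeff_ne_zero.mpr hf) hlc
  rw [leadingCoeff_eq_zero, ← map_zero (ofFn J)] at hA hB
  rcases hab with hab | hab
  · exact hab (injective_ofFn J hA)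
  · exact hab (injective_ofFn J hB)

end StepanovPoly

variable {f : (ZMod p)[X]} {m e : ℕ}

theorem exists_stepanovDeriv_eq_zero (hf : f ≠ 0) (hdeg : f.natDegree ≤ 3) {J g : ℕ}
    (hdim : m * (J + g) + m * (m - 1) < 2 * (J * (g + 1))) :
    ∃ a b : Fin J → (ZMod p)[X], (∀ j, (a j).natDegree ≤ g) ∧ (∀ j, (b j).natDegree ≤ g) ∧
      (a ≠ 0 ∨ b ≠ 0) ∧ ∀ k < m, stepanovDeriv f m e a b k = 0 := by
  have hJ : 0 < J := Nat.pos_of_ne_zero fun h => by simp [h] at hdim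
  let V := (Fin J → Fin (g + 1) → ZMod p) × (Fin J → Fin (g + 1) → ZMod p)
  let lift : (Fin J → Fin (g + 1) → ZMod p) → Fin J → (ZMod p)[X] := fun w j => ofFn (g + 1) (w j)
  have hlift_deg : ∀ w j, (lift w j).natDegree ≤ g := fun w j =>
    Nat.le_of_lt_succ (ofFn_natDegree_lt (Nat.succ_pos g) _)
  let T : Fin m → V →ₗ[ZMod p] (ZMod p)[X] := fun k =>
    { toFun := fun v => stepanovDeriv f m e (lift v.1) (lift v.2) k
      map_add' := fun v w => by
        rw [← stepanovDeriv_add hf]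
        congr <;> ext1 j <;> exact map_add _ _ _
      map_smul' := fun c v => by
        rw [RingHom.id_apply, ← stepanovDeriv_smul hf]
        congr <;> ext1 j <;> exact map_smul (ofFn (g + 1)) _ _ }
  have hrank : Module.finrank (ZMod p) V = 2 * (J * (g + 1)) := by
    simp [V, Module.finrank_prod, Module.finrank_pi_fintype]; ring
  have hsum : ∑ k : Fin m, (J + g + 2 * (k : ℕ)) = m * (J + g) + m * (m - 1) := by
    rw [Finset.sum_add_distrib, ← Finset.mul_sum, Fin.sum_univ_eq_sum_range (fun k => k) m,
      mul_comm 2, Finset.sum_range_id_mul_two]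
    simp
  obtain ⟨v, hv0, hv⟩ := exists_ne_zero_forall_eq_zero_of_sum_lt_finrank T
    (fun k => J + g + 2 * (k : ℕ))
    (fun k v => (natDegree_stepanovDeriv_le hf hdeg (hlift_deg v.1) (hlift_deg v.2)
      k.2.le).trans_lt (by omega))
    (by rwa [hsum, hrank])
  refine ⟨lift v.1, lift v.2, hlift_deg v.1, hlift_deg v.2, ?_, fun k hk => hv ⟨k, hk⟩⟩
  by_contra! h
  refine hv0 (Prod.ext (funext fun j => ?_) (funext fun j => ?_))
  · exact injective_ofFn _ ((congrFun h.1 j).trans (map_zero _).symm)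
  · exact injective_ofFn _ ((congrFun h.2 j).trans (map_zero _).symm)

theorem card_eval_pow_half_eq_one_mul_le {r : ZMod p} (hroot : f.rootMultiplicity r = 1)
    (hdeg : f.natDegree ≤ 3) {J m g : ℕ} (hmp : m < p) (hg : 3 + 2 * g < p)
    (hdim : m * (J + g) + m * (m - 1) < 2 * (J * (g + 1))) :
    #{v | f.eval v ^ (p / 2) = 1} * m ≤ p * (J - 1) + (3 * (m + p / 2) + g) := by
  have hf : f ≠ 0 := by rintro rfl; simp at hroot
  have hpe : p = 2 * (p / 2) + 1 := by
    have := (Fact.out : p.Prime).eq_two_or_odd; omega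
  obtain ⟨a, b, ha, hb, hab, hΨ⟩ := exists_stepanovDeriv_eq_zero (e := p / 2) hf hdeg hdim
  have hΦ := stepanovPoly_ne_zero hroot (by omega) hpe ha hb hab (m := m)
  calc #{v | f.eval v ^ (p / 2) = 1} * m ≤ (stepanovPoly f m (p / 2) a b).natDegree :=
        card_mul_le_natDegree_of_le_rootMultiplicity _ fun v hv =>
          le_rootMultiplicity_stepanovPoly hf hmp hΦ hΨ (Finset.mem_filter.mp hv).2
    _ ≤ _ := natDegree_stepanovPoly_le hdeg ha hb

theorem card_eval_pow_half_eq_one_le {r : ZMod p} (hroot : f.rootMultiplicity r = 1)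
    (hdeg : f.natDegree ≤ 3) (hp : 1600 ≤ p) :
    (#{v | f.eval v ^ (p / 2) = 1} : ℝ) ≤ p / 2 + 4 * √p := by
  obtain ⟨J, hJ⟩ : ∃ J, J = Nat.sqrt p / 3 := ⟨_, rfl⟩
  have hs : 40 ≤ Nat.sqrt p := Nat.le_sqrt.mpr (by omega)
  have hsp := Nat.sqrt_le_self p
  have hJ9 : 9 * (J * J) ≤ p := calc
    9 * (J * J) = (3 * J) * (3 * J) := by ring
    _ ≤ Nat.sqrt p * Nat.sqrt p := Nat.mul_self_le_mul_self (by omega)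
    _ ≤ p := Nat.sqrt_le p
  obtain ⟨g, hg⟩ : ∃ g, p = 2 * g + 5 := ⟨p / 2 - 2, by
    have := (Fact.out : p.Prime).eq_two_or_odd; omega⟩
  have hhalf : p / 2 = g + 2 := by omega
  -- With `J ≈ √p / 3` the dimension count reads `6 J ^ 2 < p` and the bound `p / 2 + 3 + p / J`.
  have hcount := card_eval_pow_half_eq_one_mul_le hroot hdeg (J := J + 1) (m := 2 * J)
    (g := g) (by omega) (by omega) (by
      obtain ⟨i, rfl⟩ : ∃ i, J = i + 1 := ⟨J - 1, by omega⟩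
      rw [show 2 * (i + 1) - 1 = 2 * i + 1 by omega]
      nlinarith)
  have hnat : #{v | f.eval v ^ (p / 2) = 1} * (2 * J) ≤ p * J + 6 * J + 2 * p := by
    rw [Nat.add_sub_cancel] at hcount
    omega
  have hreal : (#{v | f.eval v ^ (p / 2) = 1} : ℝ) * (2 * J) ≤ p * J + 6 * J + 2 * p := by
    exact_mod_cast hnat
  have hsqrt : √p * √p = p := Real.mul_self_sqrt (Nat.cast_nonneg p)
  have hts : √p < Nat.sqrt p + 1 := Real.real_sqrt_lt_nat_sqrt_succ
  have hsJ : (Nat.sqrt p : ℝ) ≤ 3 * J + 2 := by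
    exact_mod_cast (show Nat.sqrt p ≤ 3 * J + 2 by omega)
  have ht : (40 : ℝ) ≤ √p := le_trans (by exact_mod_cast hs) Real.nat_sqrt_le_real_sqrt
  have hJpos : (0 : ℝ) < 2 * J := by
    have : (13 : ℝ) ≤ J := by exact_mod_cast (show 13 ≤ J by omega)
    linarith
  refine le_of_mul_le_mul_right (hreal.trans ?_) hJpos
  nlinarith [mul_nonneg (by linarith : (0 : ℝ) ≤ 8 * √p - 6)
    (by linarith : (0 : ℝ) ≤ 3 * J - √p + 3)]

local notation "χ" => quadraticChar (ZMod p)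

theorem quadraticChar_eq_one_iff_pow_half {w : ZMod p} : χ w = 1 ↔ w ^ (p / 2) = 1 := by
  rcases eq_or_ne w 0 with rfl | hw
  · simp [zero_pow (Nat.div_pos (Fact.out : p.Prime).two_le two_pos).ne']
  · exact (quadraticChar_one_iff_isSquare hw).trans (ZMod.euler_criterion p hw)

theorem abs_sum_quadraticChar_eval_le {r : ZMod p} (hroot : f.rootMultiplicity r = 1)
    (hdeg : f.natDegree ≤ 3) (hp : 1600 ≤ p) : |((∑ v, χ (f.eval v) : ℤ) : ℝ)| ≤ 9 * √p := by
  have hf : f ≠ 0 := by rintro rfl; simp at hroot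
  obtain ⟨n, hn⟩ := quadraticChar_exists_neg_one (F := ZMod p) (by
    rw [ZMod.ringChar_zmod_n]; omega)
  have hn0 : n ≠ 0 := by rintro rfl; simp at hn
  have hcount : ∀ g : (ZMod p)[X], g.rootMultiplicity r = 1 → g.natDegree ≤ 3 →
      (#{v | χ (g.eval v) = 1} : ℝ) ≤ p / 2 + 4 * √p := fun g hg hgdeg => by
    simpa only [quadraticChar_eq_one_iff_pow_half] using card_eval_pow_half_eq_one_le hg hgdeg hp
  -- `χ (f v) = -1` exactly when `χ (n f v) = 1`, so both tails of the sum are Stepanov counts.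
  have hnf := hcount (C n * f) (by
      rw [rootMultiplicity_mul (mul_ne_zero (C_ne_zero.mpr hn0) hf), rootMultiplicity_C, hroot])
    ((natDegree_C_mul hn0).trans_le hdeg)
  have hzeros : (#{v | f.eval v = 0} : ℝ) ≤ 3 := by
    have : #{v | f.eval v = 0} ≤ f.natDegree :=
      card_le_degree_of_subset_roots fun v hv => by simpa [mem_roots hf] using hv
    exact_mod_cast this.trans hdeg
  have hneg : ∑ v, χ ((C n * f).eval v) = -∑ v, χ (f.eval v) := by
    simp only [eval_mul, eval_C, map_mul, hn, neg_one_mul, Finset.sum_neg_distrib]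
  have hzeros_n : #{v | (C n * f).eval v = 0} = #{v | f.eval v = 0} := by simp [hn0]
  have hsum := congrArg (Int.cast : ℤ → ℝ) (sum_quadraticChar_eq fun v => f.eval v)
  have hsumn := congrArg (Int.cast : ℤ → ℝ) (sum_quadraticChar_eq fun v => (C n * f).eval v)
  rw [hneg, hzeros_n] at hsumn
  push_cast [ZMod.card] at hsum hsumn ⊢
  have ht : (40 : ℝ) ≤ √p := Real.le_sqrt_of_sq_le (by norm_num; exact_mod_cast hp)
  rw [abs_le]
  constructor <;> linarith [hcount f hroot hdeg]

theorem abs_sum_quadraticChar_sub_mul_le (hp : 1600 ≤ p) {x : ZMod p} {q : (ZMod p)[X]}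
    (hq : q.eval x ≠ 0) (hqdeg : q.natDegree ≤ 2) :
    |((∑ v, χ ((v - x) * q.eval v) : ℤ) : ℝ)| ≤ 9 * √p := by
  have hq0 : q ≠ 0 := by rintro rfl; simp at hq
  have hroot : ((X - C x) * q).rootMultiplicity x = 1 := by
    rw [rootMultiplicity_mul (mul_ne_zero (X_sub_C_ne_zero x) hq0), rootMultiplicity_X_sub_C_self,
      rootMultiplicity_eq_zero hq]
  have hdeg : ((X - C x) * q).natDegree ≤ 3 :=
    natDegree_mul_le.trans (by rw [natDegree_X_sub_C]; omega)
  simpa using abs_sum_quadraticChar_eval_le hroot hdeg hp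

theorem sum_one_add_mul_one_add_mul_one_sub_le (x y z : ZMod p) :
    ∑ v, (1 + χ (v - x)) * (1 + χ (v - y)) * (1 - χ (v - z)) ≤
      8 * #{v | χ (v - x) = 1 ∧ χ (v - y) = 1 ∧ χ (v - z) ≠ 1} + 12 := by
  refine (Finset.sum_le_sum fun v _ => one_add_mul_one_add_mul_one_sub_le
    (quadraticChar_eq_zero_or_one_or_neg_one _) (quadraticChar_eq_zero_or_one_or_neg_one _)
    (quadraticChar_eq_zero_or_one_or_neg_one _)).trans_eq ?_
  simp only [Finset.sum_add_distrib, ← Finset.mul_sum, Finset.natCast_card_filter,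
    quadraticChar_eq_zero_iff, sub_eq_zero, Finset.sum_ite_eq', Finset.mem_univ, if_true]
  norm_num

theorem sum_one_add_mul_one_add_mul_one_sub_eq (hp2 : p ≠ 2) (x y z : ZMod p) :
    ∑ v, (1 + χ (v - x)) * (1 + χ (v - y)) * (1 - χ (v - z)) =
      p + ∑ v, χ ((v - x) * (v - y)) - ∑ v, χ ((v - x) * (v - z)) - ∑ v, χ ((v - y) * (v - z))
        - ∑ v, χ ((v - x) * ((v - y) * (v - z))) := by
  have hlin : ∀ a : ZMod p, ∑ v, χ (v - a) = 0 := fun a =>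
    (Fintype.sum_equiv (Equiv.subRight a) _ _ fun _ => rfl).trans
      (quadraticChar_sum_zero (by rwa [ZMod.ringChar_zmod_n]))
  calc _ = ∑ v, (1 + χ (v - x) + χ (v - y) - χ (v - z) + χ ((v - x) * (v - y))
        - χ ((v - x) * (v - z)) - χ ((v - y) * (v - z)) - χ ((v - x) * ((v - y) * (v - z)))) :=
        Finset.sum_congr rfl fun v _ => by simp only [map_mul]; ring
    _ = _ := by
      simp only [Finset.sum_add_distrib, Finset.sum_sub_distrib, hlin, Finset.sum_const,
        Finset.card_univ, ZMod.card, nsmul_eq_mul, mul_one, add_zero, sub_zero]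

theorem le_card_filter_quadraticChar {x y z : ZMod p} (hxy : x ≠ y) (hxz : x ≠ z) (hyz : y ≠ z) :
    (p : ℝ) / 8 - 5 * √p - 1 ≤ #{v | χ (v - x) = 1 ∧ χ (v - y) = 1 ∧ χ (v - z) ≠ 1} := by
  have hsqrt : √p * √p = p := Real.mul_self_sqrt (Nat.cast_nonneg p)
  rcases lt_or_ge √p 40 with hsmall | hlarge
  · exact (by nlinarith [Real.sqrt_nonneg p] : (p : ℝ) / 8 - 5 * √p - 1 ≤ 0).trans
      (Nat.cast_nonneg _)
  have hp : 1600 ≤ p := by exact_mod_cast (show (1600 : ℝ) ≤ p by nlinarith)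
  have hlin : ∀ a : ZMod p, (X - C a).natDegree ≤ 2 := fun a => by rw [natDegree_X_sub_C]; omega
  have hxy' := abs_sum_quadraticChar_sub_mul_le hp (x := x) (q := X - C y)
    (by simpa [sub_eq_zero]) (hlin y)
  have hxz' := abs_sum_quadraticChar_sub_mul_le hp (x := x) (q := X - C z)
    (by simpa [sub_eq_zero]) (hlin z)
  have hyz' := abs_sum_quadraticChar_sub_mul_le hp (x := y) (q := X - C z)
    (by simpa [sub_eq_zero]) (hlin z)
  have hxyz' := abs_sum_quadraticChar_sub_mul_le hp (x := x) (q := (X - C y) * (X - C z))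
    (by simp [sub_eq_zero, hxy, hxz]) (natDegree_mul_le.trans (by simp))
  simp only [eval_sub, eval_mul, eval_X, eval_C] at hxy' hxz' hyz' hxyz'
  have hle := sum_one_add_mul_one_add_mul_one_sub_le x y z
  rw [sum_one_add_mul_one_add_mul_one_sub_eq (by omega)] at hle
  have hle' := (Int.cast_le (R := ℝ)).mpr hle
  push_cast at hle' hxy' hxz' hyz' hxyz'
  rw [abs_le] at hxy' hxz' hyz' hxyz'
  linarith [hxy'.1, hxz'.2, hyz'.2, hxyz'.2]

theorem paley_adj_iff (hp : p % 4 = 1) (a b : ZMod p) : (paley p).Adj a b ↔ χ (b - a) = 1 := by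
  refine ⟨fun ⟨hab, _, hba⟩ =>
    (quadraticChar_one_iff_isSquare (sub_ne_zero.mpr hab.symm)).mpr hba, fun h => ?_⟩
  have hne : b - a ≠ 0 := fun h0 => by simp [h0] at h
  have hsq := (quadraticChar_one_iff_isSquare hne).mp h
  have hneg : IsSquare (-1 : ZMod p) := ZMod.exists_sq_eq_neg_one_iff.mpr (by omega)
  refine ⟨fun hab => hne (by rw [hab, sub_self]), ?_, hsq⟩
  simpa using hneg.mul hsq

end Paley

theorem stmt_8 (p : ℕ) [Fact p.Prime] (hp4 : p % 4 = 1)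
    (x y z : ZMod p) (hxy : x ≠ y) (hxz : x ≠ z) (hyz : y ≠ z) :
    (p : ℝ) / 8 - 5 * Real.sqrt p - 1 ≤
      (((((paley p).neighborSet x ∩ (paley p).neighborSet y) \
          (paley p).neighborSet z).ncard : ℝ)) ∧
    (1711 ≤ p →
      (((paley p).neighborSet x ∩ (paley p).neighborSet y) \
        (paley p).neighborSet z).Nonempty) := by
  have hset : ((paley p).neighborSet x ∩ (paley p).neighborSet y) \ (paley p).neighborSet z =
      ↑(Finset.univ.filter fun v => quadraticChar (ZMod p) (v - x) = 1 ∧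
        quadraticChar (ZMod p) (v - y) = 1 ∧ quadraticChar (ZMod p) (v - z) ≠ 1) := by
    ext v
    simp [Paley.paley_adj_iff hp4, and_assoc]
  have hcard := Paley.le_card_filter_quadraticChar hxy hxz hyz
  rw [hset, Set.ncard_coe_finset]
  refine ⟨hcard, fun hp => Finset.coe_nonempty.mpr (Finset.card_pos.mp ?_)⟩
  have hsqrt : √p * √p = p := Real.mul_self_sqrt (Nat.cast_nonneg p)
  have h41 : (41 : ℝ) < √p :=
    Real.lt_sqrt_of_sq_lt (by norm_num; exact_mod_cast (by omega : 1681 < p))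
  exact_mod_cast (by nlinarith : (0 : ℝ) < p / 8 - 5 * √p - 1).trans_le hcard
end

section
/- Let p ≥ 30 be a prime with −1 a quadratic residue and 2, 3 non-residues mod p. Then the path system 𝒫_p on the Paley graph G_p is irreducible: there is no partition 𝔽_p = A ⊔ B with A, B nonempty such that for all u, v ∈ A all vertices of P_{u,v} lie in A, and for all u, v ∈ B all vertices of P_{u,v} lie in B. -/
open scoped Classical

/-- The list of vertices of the path `P_{a,b}` of the path system `𝒫_p`. -/
noncomputable def specList (p : ℕ) (a b : ZMod p) : List (ZMod p) :=
  if IsQR p (b - a) then [a, b]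
  else if b - a = 3 then [a, a + 1, a + 2, b]
  else [a, (a + b) * (2 : ZMod p)⁻¹, b]


/-!
Colour `𝔽_p` by membership in `A` and lift the colouring periodically to `ℤ`. If both colour
classes are closed under `𝒫_p`, two points of equal colour at a non-residue distance `d ≠ 3`
force their midpoint to have that colour, and two at distance `3` force the points in between.
A monochromatic run `[y, y + n)` of minimal length is flanked on both sides by runs of the other
colour of length at least `n`. For `n = 2`, the points `y - 1` and `y + 2` are at distance `3`,
which forces `y` to the wrong colour. Otherwise, for the least `k` with `n < 2k²` we have
`2k² < 3n`, and `2k²` is a non-residue since `2` is; the flanking runs contain two points at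
distance `2k²` whose midpoint lies in the run.
-/

section Runs

variable {c : ℤ → Prop}

def IsBoundary (c : ℤ → Prop) (a : ℤ) : Prop := ¬(c (a - 1) ↔ c a)

structure IsFlankedRun (c : ℤ → Prop) (y : ℤ) (n : ℕ) : Prop where
  inner : ∀ i : ℤ, 0 ≤ i → i < n → (c (y + i) ↔ c y)
  left : ∀ i : ℤ, -n ≤ i → i < 0 → ¬(c (y + i) ↔ c y)
  right : ∀ i : ℤ, n ≤ i → i < 2 * n → ¬(c (y + i) ↔ c y)

lemma iff_of_forall_not_isBoundary {a b : ℤ} (hab : a ≤ b)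
    (h : ∀ z, a < z → z ≤ b → ¬IsBoundary c z) : c a ↔ c b := by
  induction b, hab using Int.leInduction with
  | base => rfl
  | succ b hab ih =>
    have hb := h (b + 1) (by omega) le_rfl
    rw [IsBoundary, not_not, add_sub_cancel_right] at hb
    exact (ih fun z hz hzb => h z hz (by omega)).trans hb

lemma exists_isBoundary {p : ℤ} (hper : Function.Periodic c p) (hp : 0 < p) {x y : ℤ}
    (hxy : ¬(c x ↔ c y)) : ∃ a, IsBoundary c a := by
  by_contra! h
  have hle : x ≤ y + |x - y| * p := by
    nlinarith [le_abs_self (x - y), abs_nonneg (x - y)]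
  exact hxy ((iff_of_forall_not_isBoundary hle fun z _ _ => h z).trans
    (hper.int_mul |x - y| y).to_iff)

lemma iff_of_isBoundary_gap {n : ℕ}
    (hgap : ∀ a b, IsBoundary c a → IsBoundary c b → a < b → n ≤ b - a)
    {a u v : ℤ} (ha : IsBoundary c a) (huv : u ≤ v) (hu : a - n ≤ u) (hv : v < a + n)
    (hside : a ≤ u ∨ v < a) : c u ↔ c v :=
  iff_of_forall_not_isBoundary huv fun z hzu hzv hz => by
    rcases lt_trichotomy z a with h | rfl | h
    · have := hgap z a hz ha h; omega
    · omega
    · have := hgap a z ha hz h; omega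

/-- Take two boundaries at minimal distance. -/
lemma exists_isFlankedRun {p : ℕ} (hper : Function.Periodic c p) (hp : 0 < p) {x y : ℤ}
    (hxy : ¬(c x ↔ c y)) : ∃ y : ℤ, ∃ n : ℕ, 0 < n ∧ IsFlankedRun c y n := by
  obtain ⟨a, ha⟩ := exists_isBoundary hper (by exact_mod_cast hp) hxy
  have hap : IsBoundary c (a + p) := by rwa [IsBoundary, add_sub_right_comm, hper, hper]
  have hex : ∃ n : ℕ, 0 < n ∧ ∃ y, IsBoundary c y ∧ IsBoundary c (y + n) := ⟨p, hp, a, ha, hap⟩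
  obtain ⟨hn, y, hy, hyn⟩ := Nat.find_spec hex
  set n := Nat.find hex
  have hgap : ∀ a b, IsBoundary c a → IsBoundary c b → a < b → n ≤ b - a := by
    intro a b ha hb hab
    have := Nat.find_min' hex (m := (b - a).toNat)
      ⟨by omega, a, ha, by rwa [Int.toNat_of_nonneg (by omega), add_sub_cancel]⟩
    omega
  have hy_gap := fun u v => iff_of_isBoundary_gap hgap hy (u := u) (v := v)
  have hyn_gap := fun u v => iff_of_isBoundary_gap hgap hyn (u := u) (v := v)
  refine ⟨y, n, hn, fun i hi hin => ?_, fun i hi hi0 h => ?_, fun i hi hin h => ?_⟩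
  · exact (hy_gap y (y + i) (by omega) (by omega) (by omega) (by omega)).symm
  · exact hy ((hy_gap (y + i) (y - 1) (by omega) (by omega) (by omega) (by omega)).symm.trans h)
  · have hin := hy_gap y (y + n - 1) (by omega) (by omega) (by omega) (by omega)
    have hout := hyn_gap (y + n) (y + i) (by omega) (by omega) (by omega) (by omega)
    exact hyn (hin.symm.trans (h.symm.trans hout.symm))

lemma IsFlankedRun.two_mul_le {p : ℕ} (hper : Function.Periodic c p) (hp : 0 < p) {y : ℤ}
    {n : ℕ} (h : IsFlankedRun c y n) : 2 * n ≤ p := by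
  by_contra! hlt
  rcases le_or_gt n p with hnp | hpn
  · apply h.left (-n) le_rfl (by omega)
    rw [show y + -(n : ℤ) = y + (p - n) - p by ring, hper.sub_eq]
    exact h.inner (p - n) (by omega) (by omega)
  · apply h.left (-1) (by omega) (by omega)
    rw [show y + -1 = y + (p - 1) - p by ring, hper.sub_eq]
    exact h.inner (p - 1) (by omega) (by omega)

end Runs

/-- Take `m = k²` for the least `k` with `n < 2 k²`; then `2 k² = p + 3` would force `k = 2`
and `n = 2`. -/
lemma exists_isSquare_two_mul_between {n p : ℕ} (hn : 0 < n) (hn2 : n ≠ 2) (hnp : 2 * n ≤ p) :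
    ∃ m : ℕ, n < 2 * m ∧ 2 * m < 3 * n ∧ 2 * m ≠ p + 3 ∧ IsSquare m := by
  have hex : ∃ k : ℕ, n < 2 * k ^ 2 := ⟨n + 1, by nlinarith⟩
  have hk0 : Nat.find hex ≠ 0 := fun h => by simpa [h] using Nat.find_spec hex
  obtain ⟨j, hj⟩ := Nat.exists_eq_add_one_of_ne_zero hk0
  have hk := Nat.find_spec hex
  have hj' : ¬ n < 2 * j ^ 2 := Nat.find_min hex (by omega)
  rw [hj] at hk
  refine ⟨(j + 1) ^ 2, by omega, ?_, ?_, ⟨j + 1, sq _⟩⟩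
  · rcases (by omega : j = 0 ∨ j = 1 ∨ 2 ≤ j) with rfl | rfl | h2 <;> [omega; omega; nlinarith]
  · intro h
    rcases (by omega : j = 0 ∨ j = 1 ∨ 2 ≤ j) with rfl | rfl | h2 <;> [omega; omega; nlinarith]

lemma natCast_ne_three {p M : ℕ} (hp : 3 < p) (hM : M < 2 * p) (hM3 : M ≠ 3)
    (hMp : M ≠ p + 3) : (M : ZMod p) ≠ 3 := by
  intro h
  have hmod := (ZMod.natCast_eq_natCast_iff' M 3 p).1 (by simpa using h)
  rw [Nat.mod_eq_of_lt hp] at hmod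
  rcases lt_or_ge M p with hlt | hge
  · rw [Nat.mod_eq_of_lt hlt] at hmod; exact hM3 hmod
  · rw [Nat.mod_eq_sub_mod hge, Nat.mod_eq_of_lt (by omega)] at hmod; omega

lemma natCast_ne_zero_of_lt {p a : ℕ} (ha : 0 < a) (hap : a < p) : (a : ZMod p) ≠ 0 := by
  rw [Ne, ZMod.natCast_eq_zero_iff]
  exact Nat.not_dvd_of_pos_of_lt ha hap

lemma not_isSquare_mul_sq {F : Type*} [Field F] {a b : F} (ha : ¬IsSquare a) (hb : b ≠ 0) :
    ¬IsSquare (a * b ^ 2) := fun h => ha (by simpa [hb] using h.div (IsSquare.sq b))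

section PathSystem

variable {p : ℕ} {A : Set (ZMod p)}

def IsPathClosed (p : ℕ) (A : Set (ZMod p)) : Prop :=
  ∀ u ∈ A, ∀ v ∈ A, u ≠ v → ∀ w ∈ specList p u v, w ∈ A

lemma specList_add_three (h3 : ¬IsQR p 3) (x : ZMod p) :
    specList p x (x + 3) = [x, x + 1, x + 2, x + 3] := by
  simp [specList, h3]

lemma specList_add_of_not_isSquare {x d : ZMod p} (hd : ¬IsSquare d) (hd3 : d ≠ 3) :
    specList p x (x + d) = [x, (x + (x + d)) * 2⁻¹, x + d] := by
  simp [specList, IsQR, hd, hd3]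

lemma iff_of_mem_specList (hA : IsPathClosed p A) (hAc : IsPathClosed p Aᶜ) {u v w : ZMod p}
    (huv : u ≠ v) (h : u ∈ A ↔ v ∈ A) (hw : w ∈ specList p u v) : u ∈ A ↔ w ∈ A := by
  by_cases hu : u ∈ A
  · exact iff_of_true hu (hA u hu v (h.1 hu) huv w hw)
  · exact iff_of_false hu fun hwA => hAc u hu v (mt h.2 hu) huv w hw hwA

lemma iff_add_one_of_iff_add_three (hA : IsPathClosed p A) (hAc : IsPathClosed p Aᶜ)
    (h3 : ¬IsQR p 3) (h30 : (3 : ZMod p) ≠ 0) {x : ZMod p} (h : x ∈ A ↔ x + 3 ∈ A) :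
    x ∈ A ↔ x + 1 ∈ A :=
  iff_of_mem_specList hA hAc (by simpa using h30) h (by simp [specList_add_three h3])

lemma iff_add_of_iff_add_two_mul [Fact p.Prime] (hA : IsPathClosed p A)
    (hAc : IsPathClosed p Aᶜ) (h2 : (2 : ZMod p) ≠ 0) {x e : ZMod p}
    (he : ¬IsSquare (2 * e)) (he3 : 2 * e ≠ 3) (h : x ∈ A ↔ x + 2 * e ∈ A) :
    x ∈ A ↔ x + e ∈ A := by
  have hne : x ≠ x + 2 * e := fun hx => he (by rw [left_eq_add.mp hx]; exact IsSquare.zero)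
  have hmid : (x + (x + 2 * e)) * 2⁻¹ = x + e := by field_simp; ring
  exact iff_of_mem_specList hA hAc hne h (by simp [specList_add_of_not_isSquare he he3, hmid])

lemma not_isFlankedRun_two (hA : IsPathClosed p A) (hAc : IsPathClosed p Aᶜ)
    (h3 : ¬IsQR p 3) (h30 : (3 : ZMod p) ≠ 0) (y : ℤ) :
    ¬IsFlankedRun (fun z : ℤ => (z : ZMod p) ∈ A) y 2 := by
  intro h
  have hl := h.left (-1) (by omega) (by omega)
  have hr := h.right 2 (by omega) (by omega)
  push_cast [← sub_eq_add_neg] at hl hr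
  have h13 := iff_add_one_of_iff_add_three hA hAc h3 h30 (x := (y : ZMod p) - 1)
  rw [sub_add_cancel, show (y : ZMod p) - 1 + 3 = y + 2 by ring] at h13
  exact hl (h13 (by tauto))

lemma not_isFlankedRun_of_ne_two [Fact p.Prime] (hA : IsPathClosed p A)
    (hAc : IsPathClosed p Aᶜ) (hp : 3 < p) (h2 : ¬IsSquare (2 : ZMod p)) {n : ℕ} (hn : 0 < n)
    (hn2 : n ≠ 2) (h2n : 2 * n ≤ p) (y : ℤ) :
    ¬IsFlankedRun (fun z : ℤ => (z : ZMod p) ∈ A) y n := by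
  intro h
  obtain ⟨m, hm1, hm2, hmp, k, rfl⟩ := exists_isSquare_two_mul_between hn hn2 h2n
  have hk : (k : ZMod p) ≠ 0 := natCast_ne_zero_of_lt (by nlinarith) (by nlinarith)
  have hsq : ¬IsSquare (2 * ((k * k : ℕ) : ZMod p)) := by
    simpa [sq] using not_isSquare_mul_sq h2 hk
  have h3 : 2 * ((k * k : ℕ) : ZMod p) ≠ 3 := by
    exact_mod_cast natCast_ne_three hp (by omega) (by omega) hmp
  have h2ne : (2 : ZMod p) ≠ 0 := by
    exact_mod_cast natCast_ne_zero_of_lt (p := p) two_pos (by omega)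
  obtain ⟨i, hi1, hin, hj1, hj2⟩ : ∃ i : ℤ, 1 ≤ i ∧ i ≤ n ∧ n ≤ 2 * (k * k : ℕ) - i ∧
      2 * (k * k : ℕ) - i < 2 * n := by
    rcases le_or_gt (2 * (k * k)) (2 * n) with hle | hgt
    · exact ⟨1, by omega⟩
    · exact ⟨2 * (k * k : ℕ) - 2 * n + 1, by omega⟩
  have hl := h.left (-i) (by omega) (by omega)
  have hr := h.right (2 * (k * k : ℕ) - i) hj1 hj2
  have hmid := h.inner ((k * k : ℕ) - i) (by omega) (by omega)
  have key := iff_add_of_iff_add_two_mul hA hAc h2ne hsq h3 (x := ((y - i : ℤ) : ZMod p))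
  push_cast at hl hr hmid key
  rw [show (y : ZMod p) - i + 2 * (k * k) = y + (2 * (k * k) - i) by ring,
    show (y : ZMod p) - i + k * k = y + (k * k - i) by ring] at key
  rw [← sub_eq_add_neg] at hl
  exact hl ((key (by tauto)).trans hmid)

end PathSystem

theorem stmt_12_general (p : ℕ) [Fact p.Prime] (hp : 30 ≤ p)
    (h2 : ¬ IsQR p 2) (h3 : ¬ IsQR p 3) :
    ¬ ∃ A B : Set (ZMod p), A.Nonempty ∧ B.Nonempty ∧
      (∀ v, v ∈ A ∨ v ∈ B) ∧ (∀ v, ¬ (v ∈ A ∧ v ∈ B)) ∧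
      (∀ u ∈ A, ∀ v ∈ A, u ≠ v → ∀ w ∈ specList p u v, w ∈ A) ∧
      (∀ u ∈ B, ∀ v ∈ B, u ≠ v → ∀ w ∈ specList p u v, w ∈ B) := by
  rintro ⟨A, B, ⟨a, ha⟩, ⟨b, hb⟩, hcov, hdis, hA, hB⟩
  obtain rfl : B = Aᶜ := by
    ext v
    have := hcov v
    have := hdis v
    simp only [Set.mem_compl_iff]
    tauto
  obtain ⟨a, rfl⟩ := ZMod.intCast_surjective a
  obtain ⟨b, rfl⟩ := ZMod.intCast_surjective b
  have hper : Function.Periodic (fun z : ℤ => (z : ZMod p) ∈ A) p := fun z => by simp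
  obtain ⟨y, n, hn, hrun⟩ := exists_isFlankedRun hper (by omega) (x := a) (y := b) (by tauto)
  have h2ne : (2 : ZMod p) ≠ 0 := by
    exact_mod_cast natCast_ne_zero_of_lt (p := p) two_pos (by omega)
  have h30 : (3 : ZMod p) ≠ 0 := by
    exact_mod_cast natCast_ne_zero_of_lt (p := p) three_pos (by omega)
  rcases eq_or_ne n 2 with rfl | hn2
  · exact not_isFlankedRun_two hA hB h3 h30 y hrun
  · exact not_isFlankedRun_of_ne_two hA hB (by omega) (fun hs => h2 ⟨h2ne, hs⟩) hn hn2
      (hrun.two_mul_le hper (by omega)) y hrun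

theorem stmt_12 (p : ℕ) [Fact p.Prime] (hp : 30 ≤ p)
    (h1 : IsQR p (-1)) (h2 : ¬ IsQR p 2) (h3 : ¬ IsQR p 3) :
    ¬ ∃ A B : Set (ZMod p), A.Nonempty ∧ B.Nonempty ∧
      (∀ v, v ∈ A ∨ v ∈ B) ∧ (∀ v, ¬ (v ∈ A ∧ v ∈ B)) ∧
      (∀ u ∈ A, ∀ v ∈ A, u ≠ v → ∀ w ∈ specList p u v, w ∈ A) ∧
      (∀ u ∈ B, ∀ v ∈ B, u ≠ v → ∀ w ∈ specList p u v, w ∈ B) :=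
  stmt_12_general p hp h2 h3
end

section
/- Let p ≥ 1711 be a prime with −1 a residue and 2, 3 non-residues mod p, and a, b ∈ R' = R \ {(p+3)/2,(p−3)/2} with 4a ≠ b. Then there exist distinct α, β, γ ∈ R' such that 2a = α + β and 2β = γ + b. -/
/-- `R' = R \ {(p+3)/2, (p-3)/2}`: the quadratic residues with two elements removed. -/
def Rp' (p : ℕ) : Set (ZMod p) :=
  {a | IsQR p a ∧ a ≠ (((p + 3) / 2 : ℕ) : ZMod p) ∧ a ≠ (((p - 3) / 2 : ℕ) : ZMod p)}

/-!
Writing `χ` for the quadratic character, `β` works with `α = 2a - β`, `γ = 2β - b` as soon as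
`χ β = χ (β - 2a) = 1`, `χ (β - b/2) = -1` (because `χ (-1) = 1`, `χ 2 = -1`) and `β` avoids nine
further values. Weighting each `β` by `(1 + χ β)(1 + χ (β - 2a))(1 - χ (β - b/2))` reduces the count
to the cubic sum `T = ∑ χ β χ (β - 2a) χ (β - b/2)`. Instead of Weil's bound, pairing `β` with its
reflection about a suitable point gives `2T ≤ p - 1`, so roughly `p/16` values of `β` qualify.
-/

open Finset

theorem mul_add_le_one_add_mul {R : Type*} [CommRing R] [LinearOrder R] [IsStrictOrderedRing R]
    {h x y : R} (hh : |h| ≤ 1) (hx : |x| ≤ 1) (hy : |y| ≤ 1) : h * (x + y) ≤ 1 + x * y := by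
  obtain ⟨hh₁, hh₂⟩ := abs_le.mp hh
  obtain ⟨hx₁, hx₂⟩ := abs_le.mp hx
  obtain ⟨hy₁, hy₂⟩ := abs_le.mp hy
  have h₁ : 0 ≤ (1 + x) * (1 + y) := by nlinarith
  have h₂ : 0 ≤ (1 - x) * (1 - y) := by nlinarith
  nlinarith

section QuadraticChar

variable {F : Type*} [Field F] [Fintype F] [DecidableEq F]

local notation "χ" => quadraticChar F

theorem abs_quadraticChar_le_one (x : F) : |χ x| ≤ 1 := by
  rcases quadraticChar_isQuadratic F x with h | h | h <;> simp [h]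

theorem quadraticChar_neg_of_neg_one (hneg : χ (-1) = 1) (x : F) : χ (-x) = χ x := by
  rw [neg_eq_neg_one_mul, map_mul, hneg, one_mul]

theorem sum_quadraticChar_sub (hF : ringChar F ≠ 2) (u : F) : ∑ x, χ (x - u) = 0 := by
  simpa using (Equiv.subRight u).sum_comp (χ ·) |>.trans (quadraticChar_sum_zero hF)

theorem sum_quadraticChar_sub_mul_sub (hF : ringChar F ≠ 2) {u v : F} (huv : u ≠ v) :
    ∑ x, χ (x - u) * χ (x - v) = -1 := by
  have hd : v - u ≠ 0 := sub_ne_zero.mpr huv.symm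
  have hsq : χ (v - u) * χ (v - u) = 1 := by rw [← sq, quadraticChar_sq_one hd]
  have hneg : χ (-1) * χ (-1) = 1 := by rw [← map_mul]; simp
  calc ∑ x, χ (x - u) * χ (x - v)
      = ∑ t, χ ((v - u) * t) * χ ((v - u) * (t - 1)) :=
        (Fintype.sum_equiv ((Equiv.mulLeft₀ (v - u) hd).trans (Equiv.addLeft u)) _ _
          fun t => by
            show _ = χ (u + (v - u) * t - u) * χ (u + (v - u) * t - v)
            ring_nf).symm
    _ = χ (-1) * jacobiSum χ χ := by
        rw [jacobiSum, mul_sum]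
        refine sum_congr rfl fun t _ => ?_
        rw [show t - 1 = -1 * (1 - t) by ring, map_mul, map_mul, map_mul]
        linear_combination (χ t * χ (-1) * χ (1 - t)) * hsq
    _ = -1 := by
        have hJ := jacobiSum_nontrivial_inv (quadraticChar_ne_one hF)
        rw [(quadraticChar_isQuadratic F).inv] at hJ
        rw [hJ]
        linear_combination -hneg

/-- The reflection `x ↦ 2w + s - x`, where `s = u + v - 2w`, preserves the product up to trading
the factor `χ (x - w)` for `χ (s - (x - w))`. Adding the two expressions and bounding termwise by
`mul_add_le_one_add_mul` leaves `∑ₜ (1 + χ t χ (s - t)) = |F| - 1`, as `s ≠ 0`. -/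
theorem two_mul_sum_quadraticChar_sub_mul_sub_mul_sub_le (hF : ringChar F ≠ 2)
    (hneg : χ (-1) = 1) {u v w : F} (huvw : u + v ≠ 2 * w) :
    2 * ∑ x, χ (x - u) * χ (x - v) * χ (x - w) ≤ Fintype.card F - 1 := by
  set s := u + v - 2 * w
  have hs : s ≠ 0 := sub_ne_zero.mpr huvw
  set f : F → ℤ := fun x => χ (x - u) * χ (x - v) * χ (x - w)
  set g : F → ℤ := fun t => χ (w + t - u) * χ (w + t - v)
  have hg : ∀ t, |g t| ≤ 1 := fun t => by
    simpa only [g, abs_mul] using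
      mul_le_one₀ (abs_quadraticChar_le_one _) (abs_nonneg _) (abs_quadraticChar_le_one _)
  have hf₁ : ∀ t, f (w + t) = g t * χ t := fun t => by simp only [f, g, add_sub_cancel_left]
  have hf₂ : ∀ t, f (w + s - t) = g t * χ (s - t) := fun t => by
    simp only [f, g]
    rw [show w + s - t - u = -(w + t - v) by ring, show w + s - t - v = -(w + t - u) by ring,
      show w + s - t - w = s - t by ring, quadraticChar_neg_of_neg_one hneg,
      quadraticChar_neg_of_neg_one hneg]
    ring
  calc 2 * ∑ x, f x = ∑ t, f (w + t) + ∑ t, f (w + s - t) := by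
        rw [two_mul]
        congr 1
        exacts [(Equiv.sum_comp (Equiv.addLeft w) f).symm,
          (Equiv.sum_comp (Equiv.subLeft (w + s)) f).symm]
    _ = ∑ t, g t * (χ t + χ (s - t)) := by
        rw [← sum_add_distrib]
        exact sum_congr rfl fun t _ => by rw [hf₁, hf₂, mul_add]
    _ ≤ ∑ t, (1 + χ (t - 0) * χ (t - s)) := sum_le_sum fun t _ => by
        rw [sub_zero, ← neg_sub s t, quadraticChar_neg_of_neg_one hneg]
        exact mul_add_le_one_add_mul (hg t) (abs_quadraticChar_le_one _)
          (abs_quadraticChar_le_one _)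
    _ = Fintype.card F - 1 := by
        rw [sum_add_distrib, sum_quadraticChar_sub_mul_sub hF hs.symm]
        simp [sub_eq_add_neg]

theorem sum_one_add_mul_one_add_mul_one_sub (hF : ringChar F ≠ 2) {u v w : F} (huv : u ≠ v)
    (huw : u ≠ w) (hvw : v ≠ w) :
    ∑ x, (1 + χ (x - u)) * (1 + χ (x - v)) * (1 - χ (x - w)) =
      Fintype.card F + 1 - ∑ x, χ (x - u) * χ (x - v) * χ (x - w) := by
  have expand : ∀ x, (1 + χ (x - u)) * (1 + χ (x - v)) * (1 - χ (x - w)) =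
      1 + χ (x - u) + χ (x - v) - χ (x - w) + χ (x - u) * χ (x - v) - χ (x - u) * χ (x - w)
        - χ (x - v) * χ (x - w) - χ (x - u) * χ (x - v) * χ (x - w) := fun x => by ring
  simp only [expand, sum_add_distrib, sum_sub_distrib, sum_quadraticChar_sub hF,
    sum_quadraticChar_sub_mul_sub hF huv, sum_quadraticChar_sub_mul_sub hF huw,
    sum_quadraticChar_sub_mul_sub hF hvw]
  simp only [sum_const, card_univ, nsmul_eq_mul, mul_one]
  ring

/-- Each `x` with the sign pattern contributes `8` to the sum above and each `x ∉ {u, v, w}`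
without it contributes `0`; the sum is at least `(|F| + 3) / 2` by the reflection bound. -/
theorem exists_quadraticChar_sub_eq_one_one_neg_one (hF : ringChar F ≠ 2) (hneg : χ (-1) = 1)
    (h3 : (3 : F) ≠ 0) {u v w : F} (huv : u ≠ v) (huw : u ≠ w) (hvw : v ≠ w) (S : Finset F)
    (hS : 16 * (#S + 3) < Fintype.card F + 3) :
    ∃ x ∉ S, χ (x - u) = 1 ∧ χ (x - v) = 1 ∧ χ (x - w) = -1 := by
  by_contra! hno
  set term : F → ℤ := fun x => (1 + χ (x - u)) * (1 + χ (x - v)) * (1 - χ (x - w))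
  set S' := S ∪ {u, v, w}
  have hvanish : ∀ x ∉ S', term x = 0 := fun x hx => by
    simp only [S', mem_union, mem_insert, mem_singleton, not_or] at hx
    obtain ⟨hxS, hxu, hxv, hxw⟩ := hx
    rcases quadraticChar_dichotomy (sub_ne_zero.mpr hxu) with h₁ | h₁
    · rcases quadraticChar_dichotomy (sub_ne_zero.mpr hxv) with h₂ | h₂
      · rcases quadraticChar_dichotomy (sub_ne_zero.mpr hxw) with h₃ | h₃
        · simp only [term, h₃]; ring
        · exact absurd h₃ (hno x hxS h₁ h₂)
      · simp only [term, h₂]; ring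
    · simp only [term, h₁]; ring
  have hterm_le : ∀ x, term x ≤ 8 := fun x => by
    obtain ⟨h₁, h₁'⟩ := abs_le.mp (abs_quadraticChar_le_one (x - u))
    obtain ⟨h₂, h₂'⟩ := abs_le.mp (abs_quadraticChar_le_one (x - v))
    obtain ⟨h₃, h₃'⟩ := abs_le.mp (abs_quadraticChar_le_one (x - w))
    calc term x ≤ 2 * 2 * 2 := by simp only [term]; gcongr <;> linarith
      _ = 8 := by norm_num
  have hsum_le : ∑ x, term x ≤ 8 * (#S + 3 : ℕ) := by
    rw [← sum_subset (subset_univ S') fun x _ hx => hvanish x hx]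
    calc ∑ x ∈ S', term x ≤ #S' • (8 : ℤ) := sum_le_card_nsmul _ _ _ fun x _ => hterm_le x
      _ ≤ 8 * (#S + 3 : ℕ) := by
        rw [nsmul_eq_mul, mul_comm]
        have : #S' ≤ #S + 3 := (card_union_le _ _).trans (by grind [card_le_three])
        gcongr
  have htriple : 2 * ∑ x, χ (x - u) * χ (x - v) * χ (x - w) ≤ Fintype.card F - 1 := by
    by_cases huvw : u + v = 2 * w
    · have huwv : u + w ≠ 2 * v := fun h => hvw (by
        have : (3 : F) * (v - w) = 0 := by linear_combination huvw - h
        exact sub_eq_zero.mp ((mul_eq_zero.mp this).resolve_left h3))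
      simpa only [mul_right_comm _ (χ (_ - w))] using
        two_mul_sum_quadraticChar_sub_mul_sub_mul_sub_le hF hneg huwv
    · exact two_mul_sum_quadraticChar_sub_mul_sub_mul_sub_le hF hneg huvw
  rw [sum_one_add_mul_one_add_mul_one_sub hF huv huw hvw] at hsum_le
  push_cast at hsum_le
  have hS' : (16 * (#S + 3) : ℤ) < Fintype.card F + 3 := by exact_mod_cast hS
  linarith

end QuadraticChar

theorem isQR_iff_quadraticChar_eq_one {p : ℕ} [Fact p.Prime] {x : ZMod p} :
    IsQR p x ↔ quadraticChar (ZMod p) x = 1 := by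
  refine ⟨fun ⟨h0, hsq⟩ => (quadraticChar_one_iff_isSquare h0).mpr hsq, fun h => ?_⟩
  have h0 : x ≠ 0 := by rintro rfl; simp at h
  exact ⟨h0, (quadraticChar_one_iff_isSquare h0).mp h⟩

theorem mem_Rp'_iff {p : ℕ} [Fact p.Prime] {x : ZMod p} :
    x ∈ Rp' p ↔ quadraticChar (ZMod p) x = 1 ∧ x ≠ (((p + 3) / 2 : ℕ) : ZMod p) ∧
      x ≠ (((p - 3) / 2 : ℕ) : ZMod p) := by
  rw [Rp', Set.mem_ofPred_eq, isQR_iff_quadraticChar_eq_one]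

/-- The values of `β` for which `α = 2a - β`, `β`, `γ = 2β - b` (with `b = 2w`) are not distinct
or one of them is `(p ± 3) / 2`. -/
def excludedβ (p : ℕ) [Fact p.Prime] (a w : ZMod p) : Finset (ZMod p) :=
  [a, 2 * w, (2 * a + 2 * w) / 3, (((p + 3) / 2 : ℕ) : ZMod p), (((p - 3) / 2 : ℕ) : ZMod p),
    2 * a - (((p + 3) / 2 : ℕ) : ZMod p), 2 * a - (((p - 3) / 2 : ℕ) : ZMod p),
    (2 * w + (((p + 3) / 2 : ℕ) : ZMod p)) / 2, (2 * w + (((p - 3) / 2 : ℕ) : ZMod p)) / 2].toFinset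

theorem card_excludedβ_le (p : ℕ) [Fact p.Prime] (a w : ZMod p) : #(excludedβ p a w) ≤ 9 :=
  List.toFinset_card_le _

theorem exists_triple_of_not_mem_excludedβ {p : ℕ} [Fact p.Prime] (htwo : (2 : ZMod p) ≠ 0)
    (hthree : (3 : ZMod p) ≠ 0) (hneg : quadraticChar (ZMod p) (-1) = 1)
    (hχ2 : quadraticChar (ZMod p) 2 = -1) {a w β : ZMod p} (hβS : β ∉ excludedβ p a w)
    (hβ : quadraticChar (ZMod p) β = 1) (hβα : quadraticChar (ZMod p) (β - 2 * a) = 1)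
    (hβγ : quadraticChar (ZMod p) (β - w) = -1) :
    ∃ α β γ : ZMod p, α ≠ β ∧ α ≠ γ ∧ β ≠ γ ∧
      α ∈ Rp' p ∧ β ∈ Rp' p ∧ γ ∈ Rp' p ∧
      2 * a = α + β ∧ 2 * β = γ + 2 * w := by
  simp only [excludedβ, List.mem_toFinset, List.mem_cons, List.not_mem_nil, or_false,
    not_or] at hβS
  obtain ⟨hβa, hβb, hβαγ, hβc₁, hβc₂, hβαc₁, hβαc₂, hβγc₁, hβγc₂⟩ := hβS
  refine ⟨2 * a - β, β, 2 * β - 2 * w, ?_, ?_, ?_, mem_Rp'_iff.mpr ⟨?_, ?_, ?_⟩,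
    mem_Rp'_iff.mpr ⟨hβ, hβc₁, hβc₂⟩, mem_Rp'_iff.mpr ⟨?_, ?_, ?_⟩, by ring, by ring⟩
  · exact fun h => hβa (mul_left_cancel₀ htwo (by linear_combination -h))
  · exact fun h => hβαγ ((eq_div_iff hthree).mpr (by linear_combination -h))
  · exact fun h => hβb (by linear_combination -h)
  · rw [← neg_sub, quadraticChar_neg_of_neg_one hneg, hβα]
  · exact fun h => hβαc₁ (by linear_combination -h)
  · exact fun h => hβαc₂ (by linear_combination -h)
  · rw [← mul_sub, map_mul, hχ2, hβγ]; norm_num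
  · exact fun h => hβγc₁ ((eq_div_iff htwo).mpr (by linear_combination h))
  · exact fun h => hβγc₂ ((eq_div_iff htwo).mpr (by linear_combination h))

theorem stmt_16_general (p : ℕ) [Fact p.Prime] (hp : 1711 ≤ p)
    (h1 : IsQR p (-1)) (h2 : ¬ IsQR p 2)
    (a b : ZMod p) (ha : a ∈ Rp' p) (hb : b ∈ Rp' p) (hab : 4 * a ≠ b) :
    ∃ α β γ : ZMod p, α ≠ β ∧ α ≠ γ ∧ β ≠ γ ∧
      α ∈ Rp' p ∧ β ∈ Rp' p ∧ γ ∈ Rp' p ∧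
      2 * a = α + β ∧ 2 * β = γ + b := by
  have hchar : ringChar (ZMod p) ≠ 2 := by rw [ZMod.ringChar_zmod_n]; omega
  have htwo : (2 : ZMod p) ≠ 0 := Ring.two_ne_zero hchar
  have hthree : (3 : ZMod p) ≠ 0 := by
    exact_mod_cast (ZMod.natCast_eq_zero_iff 3 p).not.mpr
      (Nat.not_dvd_of_pos_of_lt (by norm_num) (by omega))
  have hneg := isQR_iff_quadraticChar_eq_one.mp h1
  have hχ2 : quadraticChar (ZMod p) 2 = -1 :=
    quadraticChar_neg_one_iff_not_isSquare.mpr fun hsq => h2 ⟨htwo, hsq⟩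
  obtain ⟨w, rfl⟩ : ∃ w, b = 2 * w := ⟨b / 2, (mul_div_cancel₀ b htwo).symm⟩
  have hA : (0 : ZMod p) ≠ 2 * a := (mul_ne_zero htwo ha.1.1).symm
  have hw : (0 : ZMod p) ≠ w := (right_ne_zero_of_mul hb.1.1).symm
  obtain ⟨β, hβS, hβ, hβα, hβγ⟩ := exists_quadraticChar_sub_eq_one_one_neg_one hchar hneg hthree
    hA hw (fun h => hab (by linear_combination 2 * h)) (excludedβ p a w)
    (by rw [ZMod.card]; have := card_excludedβ_le p a w; omega)
  rw [sub_zero] at hβ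
  exact exists_triple_of_not_mem_excludedβ htwo hthree hneg hχ2 hβS hβ hβα hβγ

theorem stmt_16 (p : ℕ) [Fact p.Prime] (hp : 1711 ≤ p)
    (h1 : IsQR p (-1)) (h2 : ¬ IsQR p 2) (h3 : ¬ IsQR p 3)
    (a b : ZMod p) (ha : a ∈ Rp' p) (hb : b ∈ Rp' p) (hab : 4 * a ≠ b) :
    ∃ α β γ : ZMod p, α ≠ β ∧ α ≠ γ ∧ β ≠ γ ∧
      α ∈ Rp' p ∧ β ∈ Rp' p ∧ γ ∈ Rp' p ∧
      2 * a = α + β ∧ 2 * β = γ + b :=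
  stmt_16_general p hp h1 h2 a b ha hb hab
end
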